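/- arXiv:2409.11855 — 2 statements merged into one kernel-verified Lean document; each statement's English description precedes it below -/
import Mathlib

section
/- Let N ≥ 1 and let R = ℂ[x₀,…,x_N] be the polynomial ring over ℂ. Let Q₁,…,Qₘ (with m ≥ 2) be linearly independent homogeneous polynomials of degree 2 in R. Suppose that the syzygy module Syz(Q₁,…,Qₘ) = { (f₁,…,fₘ) ∈ Rᵐ : f₁Q₁ + ⋯ + fₘQₘ = 0 } is generated as an R-module by elements all of whose components are homogeneous of degree 1. Then for every index j ∈ {1,…,m} there exists an element (ℓ₁,…,ℓₘ) ∈ Syz(Q₁,…,Qₘ) such that every ℓᵢ is homogeneous of degree 1 and ℓⱼ ≠ 0. (This is the algebraic core of Proposition 2: if property (N₂) holds, every quadric in a basis of the degree-2 part of the ideal appears with nonzero coefficient in some linear syzygy.) -/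
/-!
STATEMENT 0 (algebraic core of Proposition 2 of the paper):
Let `R = ℂ[x₀,…,x_N]` (`N ≥ 1`) and let `Q₁,…,Qₘ` (`m ≥ 2`) be linearly independent
homogeneous polynomials of degree 2.  If the syzygy module
`{(f₁,…,fₘ) : Σ fᵢ Qᵢ = 0}` is generated as an `R`-module by a set `G` of tuples all of
whose components are homogeneous of degree 1, then for every index `j` there is a linear
syzygy `(ℓ₁,…,ℓₘ)` (all components homogeneous of degree 1, `Σ ℓᵢ Qᵢ = 0`) with `ℓⱼ ≠ 0`.
-/

open MvPolynomial

theorem every_quadric_involved_in_a_linear_syzygy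
    (N m : ℕ) (hN : 1 ≤ N) (hm : 2 ≤ m)
    (Q : Fin m → MvPolynomial (Fin (N + 1)) ℂ)
    (hQhom : ∀ i, (Q i).IsHomogeneous 2)
    (hQli : LinearIndependent ℂ Q)
    (G : Set (Fin m → MvPolynomial (Fin (N + 1)) ℂ))
    (hGsyz : ∀ g ∈ G, ∑ i, g i * Q i = 0)
    (hGhom : ∀ g ∈ G, ∀ i, (g i).IsHomogeneous 1)
    (hGgen : ∀ f : Fin m → MvPolynomial (Fin (N + 1)) ℂ,
      (∑ i, f i * Q i = 0) → f ∈ Submodule.span (MvPolynomial (Fin (N + 1)) ℂ) G)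
    (j : Fin m) :
    ∃ ℓ : Fin m → MvPolynomial (Fin (N + 1)) ℂ,
      (∀ i, (ℓ i).IsHomogeneous 1) ∧ (∑ i, ℓ i * Q i = 0) ∧ ℓ j ≠ 0 := by
  by_cases h : ∃ g ∈ G, g j ≠ 0
  · obtain ⟨g, hg, hgj⟩ := h
    exact ⟨g, hGhom g hg, hGsyz g hg, hgj⟩
  · push_neg at h
    exfalso
    -- pick k ≠ j
    have hcard : 1 < Fintype.card (Fin m) := by simpa using lt_of_lt_of_le one_lt_two hm
    obtain ⟨k, hk⟩ := Fintype.exists_ne_of_one_lt_card hcard j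
    -- Koszul syzygy
    set f : Fin m → MvPolynomial (Fin (N + 1)) ℂ :=
      fun i => (if i = j then Q k else 0) + (if i = k then -(Q j) else 0) with hf
    have hsum : ∑ i, f i * Q i = 0 := by
      simp only [hf, add_mul]
      rw [Finset.sum_add_distrib]
      have h1 : ∀ i ∈ Finset.univ, (if i = j then Q k else 0) * Q i
          = if i = j then Q k * Q j else 0 := by
        intro i _; split <;> simp_all
      have h2 : ∀ i ∈ Finset.univ, (if i = k then -(Q j) else 0) * Q i
          = if i = k then -(Q j) * Q k else 0 := by
        intro i _; split <;> simp_all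
      rw [Finset.sum_congr rfl h1, Finset.sum_congr rfl h2]
      simp [Finset.sum_ite_eq', mul_comm]
    have hmem := hGgen f hsum
    -- projection to j-th coordinate kills the span
    have hker : Submodule.span (MvPolynomial (Fin (N + 1)) ℂ) G ≤
        LinearMap.ker (LinearMap.proj (R := MvPolynomial (Fin (N + 1)) ℂ) j) := by
      rw [Submodule.span_le]
      intro g hg
      simpa using h g hg
    have hfj : f j = 0 := hker hmem
    have : Q k = 0 := by simpa [hf, hk, Ne.symm hk] using hfj
    exact hQli.ne_zero k this
end

section
/- Let N ≥ 1, R = ℂ[x₀,…,x_N], and let I ⊆ R₂ be a ℂ-subspace of dimension m ≥ 2 with basis Q₁,…,Qₘ. Suppose that the syzygy module { (f₁,…,fₘ) ∈ Rᵐ : Σᵢ fᵢQᵢ = 0 } is generated as an R-module by elements all of whose components are homogeneous of degree 1. Then the ℂ-linear contraction map ker(μ_I) ⊗ R₁* → I, sending σ ⊗ φ to (φ ⊗ id)(σ), is surjective; equivalently, I is spanned by quadrics each of which is involved in some linear syzygy of I. (This is the conclusion of Proposition 2 in the form used to deduce Syz₂(X) = X.) -/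
/-!
Let `ψ` be a functional on `I` vanishing on every quadric involved in a linear syzygy, and put
`cᵢ = ψ(Qᵢ)`. A generator `g ∈ G` is a linear syzygy `∑ gᵢ ⊗ Qᵢ` whose contractions
`∑ φ(gᵢ) Qᵢ`, `φ ∈ R₁*`, are all killed by `ψ`; hence `∑ cᵢ gᵢ = 0`. So `f ↦ ∑ cᵢ fᵢ` kills the
whole syzygy module, in particular the Koszul syzygies `Qₗ eⱼ - Qⱼ eₗ`, which gives
`cⱼ Qₗ = cₗ Qⱼ` and so `c = 0` by linear independence. Thus `ψ = 0`.
-/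

open MvPolynomial TensorProduct

noncomputable section

/-- The degree-1 part `R₁` of `R = ℂ[x₀,…,x_N]`. -/
abbrev R1 (N : ℕ) : Submodule ℂ (MvPolynomial (Fin (N + 1)) ℂ) :=
  homogeneousSubmodule (Fin (N + 1)) ℂ 1

/-- The multiplication map `μ_I : R₁ ⊗_ℂ I → R`, `v ⊗ Q ↦ v·Q`; its kernel is the space
of linear syzygies of `I`. -/
def mulMap (N : ℕ) (I : Submodule ℂ (MvPolynomial (Fin (N + 1)) ℂ)) :
    R1 N ⊗[ℂ] I →ₗ[ℂ] MvPolynomial (Fin (N + 1)) ℂ :=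
  TensorProduct.lift
    (((LinearMap.mul ℂ (MvPolynomial (Fin (N + 1)) ℂ)).comp (R1 N).subtype).compl₂ I.subtype)

/-- The contraction `σ̄(φ) = (φ ⊗ id)(σ)` of an element `σ ∈ R₁ ⊗_ℂ I` against a linear
functional `φ ∈ R₁*`.  A quadric `Q ∈ I` is *involved* in a linear syzygy `σ` if
`Q ∈ Im(σ̄)`. -/
def contract (N : ℕ) (I : Submodule ℂ (MvPolynomial (Fin (N + 1)) ℂ))
    (φ : Module.Dual ℂ (R1 N)) : R1 N ⊗[ℂ] I →ₗ[ℂ] I :=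
  TensorProduct.lift ((LinearMap.lsmul ℂ I).comp φ)

section Syzygies

variable {k A ι : Type*} [CommRing k] [CommRing A] [Algebra k A] [Fintype ι]

theorem sum_smul_eq_zero_of_mem_span {G : Set (ι → A)} {c : ι → k}
    (hc : ∀ g ∈ G, ∑ i, c i • g i = 0) {f : ι → A} (hf : f ∈ Submodule.span A G) :
    ∑ i, c i • f i = 0 := by
  have hG : G ⊆ LinearMap.ker (Fintype.linearCombination A fun i => algebraMap k A (c i)) := by
    intro g hg
    simpa [Fintype.linearCombination_apply, Algebra.smul_def, mul_comm] using hc g hg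
  simpa [Fintype.linearCombination_apply, Algebra.smul_def, mul_comm] using
    Submodule.span_le.mpr hG hf

theorem LinearIndependent.eq_zero_of_forall_syzygy [DecidableEq ι] [Nontrivial ι] {Q : ι → A}
    (hQ : LinearIndependent k Q) {c : ι → k}
    (hc : ∀ f : ι → A, ∑ i, f i * Q i = 0 → ∑ i, c i • f i = 0) : c = 0 := by
  funext j
  obtain ⟨l, hlj⟩ := exists_ne j
  have hkoszul : ∑ i, (Pi.single j (Q l) - Pi.single l (Q j) : ι → A) i * Q i = 0 := by
    simp [sub_mul, Pi.single_apply, Finset.sum_sub_distrib, mul_comm (Q l)]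
  have hrel : ∑ i, (Pi.single l (c j) - Pi.single j (c l) : ι → k) i • Q i = 0 := by
    simpa [smul_sub, Pi.single_apply, Finset.sum_sub_distrib, sub_smul] using hc _ hkoszul
  simpa [hlj] using Fintype.linearIndependent_iff.mp hQ _ hrel l

end Syzygies

theorem sum_smul_eq_zero_of_forall_dual {K V W ι : Type*} [Field K] [AddCommGroup V] [Module K V]
    [AddCommGroup W] [Module K W] [Fintype ι] (g : ι → V) (b : ι → W) (ψ : Module.Dual K W)
    (h : ∀ φ : Module.Dual K V, ψ (∑ i, φ (g i) • b i) = 0) : ∑ i, ψ (b i) • g i = 0 := by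
  refine (Module.forall_dual_apply_eq_zero_iff K _).mp fun φ => ?_
  simpa [mul_comm] using h φ

theorem Submodule.le_of_forall_dual_eq_zero {K V : Type*} [Field K] [AddCommGroup V] [Module K V]
    {p q : Submodule K V} (h : ∀ ψ : Module.Dual K q, (∀ x : q, (x : V) ∈ p → ψ x = 0) → ψ = 0) :
    q ≤ p := by
  rw [← Submodule.comap_subtype_eq_top, ← Submodule.dualAnnihilator_eq_bot_iff, eq_bot_iff]
  exact fun ψ hψ => h ψ fun x hx => (Submodule.mem_dualAnnihilator ψ).mp hψ x hx

def involvedSpan (N : ℕ) (I : Submodule ℂ (MvPolynomial (Fin (N + 1)) ℂ)) :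
    Submodule ℂ (MvPolynomial (Fin (N + 1)) ℂ) :=
  Submodule.span ℂ
    {q | ∃ σ ∈ LinearMap.ker (mulMap N I), ∃ φ : Module.Dual ℂ (R1 N),
      ((contract N I φ σ : I) : MvPolynomial (Fin (N + 1)) ℂ) = q}

section InvolvedQuadrics

variable {N : ℕ} {I : Submodule ℂ (MvPolynomial (Fin (N + 1)) ℂ)} {ι : Type*} [Fintype ι]

theorem involvedSpan_le : involvedSpan N I ≤ I := by
  rw [involvedSpan, Submodule.span_le]
  rintro _ ⟨σ, -, φ, rfl⟩
  exact (contract N I φ σ).2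

theorem mulMap_sum_tmul (g : ι → R1 N) (Q : ι → I) :
    mulMap N I (∑ i, g i ⊗ₜ Q i) = ∑ i, (g i : MvPolynomial (Fin (N + 1)) ℂ) * Q i := by
  simp [mulMap]

theorem contract_sum_tmul (φ : Module.Dual ℂ (R1 N)) (g : ι → R1 N) (Q : ι → I) :
    contract N I φ (∑ i, g i ⊗ₜ Q i) = ∑ i, φ (g i) • Q i := by
  simp [contract]

theorem coe_sum_smul_mem_involvedSpan {g : ι → R1 N} {Q : ι → I}
    (hgQ : ∑ i, (g i : MvPolynomial (Fin (N + 1)) ℂ) * Q i = 0) (φ : Module.Dual ℂ (R1 N)) :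
    ((∑ i, φ (g i) • Q i : I) : MvPolynomial (Fin (N + 1)) ℂ) ∈ involvedSpan N I :=
  Submodule.subset_span
    ⟨_, (mulMap_sum_tmul g Q).trans hgQ, φ, congrArg Subtype.val (contract_sum_tmul φ g Q)⟩

end InvolvedQuadrics

theorem span_of_involved_quadrics_eq_general
    (N m : ℕ) (hm : 2 ≤ m)
    (I : Submodule ℂ (MvPolynomial (Fin (N + 1)) ℂ))
    (Q : Fin m → MvPolynomial (Fin (N + 1)) ℂ)
    (hQli : LinearIndependent ℂ Q)
    (hQspan : Submodule.span ℂ (Set.range Q) = I)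
    (G : Set (Fin m → MvPolynomial (Fin (N + 1)) ℂ))
    (hGsyz : ∀ g ∈ G, ∑ i, g i * Q i = 0)
    (hGhom : ∀ g ∈ G, ∀ i, (g i).IsHomogeneous 1)
    (hGgen : ∀ f : Fin m → MvPolynomial (Fin (N + 1)) ℂ,
      (∑ i, f i * Q i = 0) → f ∈ Submodule.span (MvPolynomial (Fin (N + 1)) ℂ) G) :
    Submodule.span ℂ
      {q : MvPolynomial (Fin (N + 1)) ℂ |
        ∃ σ ∈ LinearMap.ker (mulMap N I), ∃ φ : Module.Dual ℂ (R1 N),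
          ((contract N I φ σ : I) : MvPolynomial (Fin (N + 1)) ℂ) = q} = I := by
  classical
  subst hQspan
  have : Nontrivial (Fin m) := Fin.nontrivial_iff_two_le.mpr hm
  let b := Module.Basis.span hQli
  refine le_antisymm involvedSpan_le
    (Submodule.le_of_forall_dual_eq_zero fun ψ hψ => b.ext fun j => ?_)
  have hc : ∀ g ∈ G, ∑ i, ψ (b i) • g i = 0 := fun g hg => by
    let gl : Fin m → R1 N := fun i => ⟨g i, (mem_homogeneousSubmodule _ _).mpr (hGhom g hg i)⟩
    have hgl : ∑ i, (gl i : MvPolynomial (Fin (N + 1)) ℂ) * b i = 0 := by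
      simpa [gl, b, Module.Basis.span_apply] using hGsyz g hg
    simpa [gl] using congrArg Subtype.val (sum_smul_eq_zero_of_forall_dual gl b ψ fun φ =>
      hψ _ (coe_sum_smul_mem_involvedSpan hgl φ))
  have hψb : (fun i => ψ (b i)) = 0 :=
    hQli.eq_zero_of_forall_syzygy fun f hf => sum_smul_eq_zero_of_mem_span hc (hGgen f hf)
  simpa using congrFun hψb j

theorem span_of_involved_quadrics_eq
    (N m : ℕ) (hN : 1 ≤ N) (hm : 2 ≤ m)
    (I : Submodule ℂ (MvPolynomial (Fin (N + 1)) ℂ))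
    (hI : I ≤ homogeneousSubmodule (Fin (N + 1)) ℂ 2)
    (Q : Fin m → MvPolynomial (Fin (N + 1)) ℂ)
    (hQli : LinearIndependent ℂ Q)
    (hQspan : Submodule.span ℂ (Set.range Q) = I)
    (G : Set (Fin m → MvPolynomial (Fin (N + 1)) ℂ))
    (hGsyz : ∀ g ∈ G, ∑ i, g i * Q i = 0)
    (hGhom : ∀ g ∈ G, ∀ i, (g i).IsHomogeneous 1)
    (hGgen : ∀ f : Fin m → MvPolynomial (Fin (N + 1)) ℂ,
      (∑ i, f i * Q i = 0) → f ∈ Submodule.span (MvPolynomial (Fin (N + 1)) ℂ) G) :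
    Submodule.span ℂ
      {q : MvPolynomial (Fin (N + 1)) ℂ |
        ∃ σ ∈ LinearMap.ker (mulMap N I), ∃ φ : Module.Dual ℂ (R1 N),
          ((contract N I φ σ : I) : MvPolynomial (Fin (N + 1)) ℂ) = q} = I :=
  span_of_involved_quadrics_eq_general N m hm I Q hQli hQspan G hGsyz hGhom hGgen

end
end
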